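/- arXiv:1912.11134 — 5 statements merged into one kernel-verified Lean document; each statement's English description precedes it below -/
import Mathlib

section
/- Let a : ℤ → (ℤ → ℂ) be a family of bounded sequences, let X_i := diag(a i) for each i ∈ ℤ, and define b : ℤ → (ℤ → ℂ) by b_i(j) := a_j(i). Then the joint spectrum of the commuting family {X_i}_{i∈ℤ} — that is, the set of all λ ∈ ℂ^ℤ such that for every finite subset Γ ⊆ ℤ the operator ∑_{i∈Γ} (X_i − λ_i·1)(X_i − λ_i·1)* + (X_i − λ_i·1)*(X_i − λ_i·1) is not invertible in the algebra of bounded operators on ℓ²(ℤ) — is equal to the closure of the set {b_i : i ∈ ℤ} in ℂ^ℤ equipped with the product topology. -/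
/-!
Each `X i - l i • 1` is diagonal with entries `a i j - l i`, so the operator tested for
invertibility is diagonal with entries `2 ∑_{i ∈ Γ} ‖a i j - l i‖²`. A diagonal operator is
invertible exactly when its entries are bounded away from zero: a left inverse `B` forces
`‖d j‖ * ‖B‖ ≥ 1` on the basis vectors, and conversely the entrywise inverse is bounded. So `l`
lies in the joint spectrum iff for every finite `Γ` some `b j` is arbitrarily close to `l` on
the coordinates in `Γ`, i.e. iff `l` is in the closure of `{b j}` for the product topology.
-/

/-- The Hilbert space ℓ²(ℤ) of square-summable complex sequences. -/
noncomputable abbrev H : Type := lp (fun _ : ℤ => ℂ) 2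

open scoped ENNReal ComplexConjugate

section Diagonal

variable {𝕜 ι : Type*} [RCLike 𝕜] {p : ℝ≥0∞} [Fact (1 ≤ p)]

def IsDiagonalWith (A : lp (fun _ : ι => 𝕜) p →L[𝕜] lp (fun _ : ι => 𝕜) p) (d : ι → 𝕜) :
    Prop :=
  ∀ f j, A f j = d j * f j

theorem exists_isDiagonalWith {d : ι → 𝕜} {C : ℝ} (hd : ∀ j, ‖d j‖ ≤ C) :
    ∃ A : lp (fun _ : ι => 𝕜) p →L[𝕜] lp (fun _ : ι => 𝕜) p, IsDiagonalWith A d := by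
  have hle (f : lp (fun _ : ι => 𝕜) p) (j : ι) : ‖d j * f j‖ ≤ ‖((C : 𝕜) • f) j‖ := by
    rw [lp.coeFn_smul, Pi.smul_apply, norm_mul, norm_smul, RCLike.norm_ofReal]
    exact mul_le_mul_of_nonneg_right ((hd j).trans (le_abs_self C)) (norm_nonneg _)
  let L : lp (fun _ : ι => 𝕜) p →ₗ[𝕜] lp (fun _ : ι => 𝕜) p :=
    { toFun f := ⟨fun j => d j * f j, (lp.memℓp ((C : 𝕜) • f)).mono' (hle f)⟩
      map_add' f g := lp.ext <| funext fun j => mul_add _ _ _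
      map_smul' c f := lp.ext <| funext fun j => mul_left_comm _ _ _ }
  refine ⟨L.mkContinuous ‖(C : 𝕜)‖ fun f => ?_, fun f j => rfl⟩
  rw [← lp.norm_const_smul (zero_lt_one.trans_le Fact.out).ne']
  exact lp.norm_mono (zero_lt_one.trans_le Fact.out).ne' (hle f)

namespace IsDiagonalWith

variable {A B : lp (fun _ : ι => 𝕜) p →L[𝕜] lp (fun _ : ι => 𝕜) p} {d e : ι → 𝕜}

theorem one : IsDiagonalWith (1 : lp (fun _ : ι => 𝕜) p →L[𝕜] _) 1 := fun f j => by
  simp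

theorem ext (hA : IsDiagonalWith A d) (hB : IsDiagonalWith B d) : A = B :=
  ContinuousLinearMap.ext fun f => lp.ext <| funext fun j => by rw [hA, hB]

theorem add (hA : IsDiagonalWith A d) (hB : IsDiagonalWith B e) :
    IsDiagonalWith (A + B) (d + e) := fun f j => by
  simp [hA f j, hB f j, add_mul]

theorem mul (hA : IsDiagonalWith A d) (hB : IsDiagonalWith B e) :
    IsDiagonalWith (A * B) (d * e) := fun f j => by
  simp [hA _ j, hB f j, mul_assoc]

theorem sub_smul_one (hA : IsDiagonalWith A d) (c : 𝕜) :
    IsDiagonalWith (A - c • 1) (fun j => d j - c) := fun f j => by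
  simp only [sub_apply, smul_apply, one_apply_eq_self, lp.coeFn_sub, lp.coeFn_smul,
    Pi.sub_apply, Pi.smul_apply, hA f j, smul_eq_mul, sub_mul]

theorem sum {κ : Type*} {s : Finset κ} {A : κ → lp (fun _ : ι => 𝕜) p →L[𝕜] _} {d : κ → ι → 𝕜}
    (hA : ∀ k ∈ s, IsDiagonalWith (A k) (d k)) :
    IsDiagonalWith (∑ k ∈ s, A k) (fun j => ∑ k ∈ s, d k j) := fun f j => by
  simp only [FunLike.coe_sum, Finset.sum_apply, lp.coeFn_sum, Finset.sum_mul]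
  exact Finset.sum_congr rfl fun k hk => hA k hk f j

theorem apply_single [DecidableEq ι] (hA : IsDiagonalWith A d) (j : ι) (c : 𝕜) :
    A (lp.single p j c) = d j • lp.single p j c := by
  ext k
  rw [hA, lp.coeFn_smul, Pi.smul_apply, smul_eq_mul]
  rcases eq_or_ne k j with rfl | hk
  · rfl
  · simp [hk]

theorem one_le_norm_mul_opNorm_of_mul_eq_one (hA : IsDiagonalWith A d) (hBA : B * A = 1)
    (j : ι) : 1 ≤ ‖d j‖ * ‖B‖ := by
  classical
  set e : lp (fun _ : ι => 𝕜) p := lp.single p j 1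
  have he : 0 < ‖e‖ := norm_pos_iff.2 fun h => by
    simpa [e] using congr_arg (fun f : lp (fun _ : ι => 𝕜) p => f j) h
  have hBe : e = d j • B e := by
    rw [← map_smul, ← hA.apply_single]
    exact (congrArg (fun T => T e) hBA).symm
  refine le_of_mul_le_mul_right ?_ he
  calc 1 * ‖e‖ = ‖d j‖ * ‖B e‖ := (one_mul _).trans ((congrArg norm hBe).trans (norm_smul _ _))
    _ ≤ ‖d j‖ * (‖B‖ * ‖e‖) := by gcongr; exact B.le_opNorm e
    _ = ‖d j‖ * ‖B‖ * ‖e‖ := by ring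

theorem isUnit_iff (hA : IsDiagonalWith A d) : IsUnit A ↔ ∃ ε > 0, ∀ j, ε ≤ ‖d j‖ := by
  constructor
  · rintro ⟨u, rfl⟩
    refine ⟨(‖(u⁻¹).val‖ + 1)⁻¹, by positivity, fun j => ?_⟩
    have h := hA.one_le_norm_mul_opNorm_of_mul_eq_one u.inv_mul j
    rw [inv_le_iff_one_le_mul₀ (by positivity)]
    nlinarith [norm_nonneg (d j)]
  · rintro ⟨ε, hε, hεd⟩
    have hd : ∀ j, d j ≠ 0 := fun j h => by simpa [h] using hε.trans_le (hεd j)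
    obtain ⟨B, hB⟩ := exists_isDiagonalWith (p := p) (d := d⁻¹) (C := ε⁻¹) fun j => by
      rw [Pi.inv_apply, norm_inv]; exact inv_anti₀ hε (hεd j)
    have hAB : d * d⁻¹ = 1 := funext fun j => mul_inv_cancel₀ (hd j)
    have hBA : d⁻¹ * d = 1 := funext fun j => inv_mul_cancel₀ (hd j)
    exact isUnit_iff_exists.2 ⟨B, (hAB ▸ hA.mul hB).ext one, (hBA ▸ hB.mul hA).ext one⟩

end IsDiagonalWith

section Hilbert

variable {A : lp (fun _ : ι => 𝕜) 2 →L[𝕜] lp (fun _ : ι => 𝕜) 2} {d : ι → 𝕜}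

theorem IsDiagonalWith.star (hA : IsDiagonalWith A d) :
    IsDiagonalWith (star A) (fun j => conj (d j)) := fun f j => by
  classical
  have h := A.adjoint_inner_right (lp.single 2 j 1) f
  rw [← ContinuousLinearMap.star_eq_adjoint, hA.apply_single, inner_smul_left,
    lp.inner_single_left, lp.inner_single_left] at h
  simpa using h

theorem isDiagonalWith_mul_star_add_star_mul (hA : IsDiagonalWith A d) :
    IsDiagonalWith (A * star A + star A * A) (fun j => ((2 * ‖d j‖ ^ 2 : ℝ) : 𝕜)) := by
  have h : (d * fun j => conj (d j)) + (fun j => conj (d j)) * d =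
      fun j => ((2 * ‖d j‖ ^ 2 : ℝ) : 𝕜) := funext fun j => by
    simp only [Pi.add_apply, Pi.mul_apply, RCLike.mul_conj, RCLike.conj_mul]
    push_cast
    ring
  exact h ▸ (hA.mul hA.star).add (hA.star.mul hA)

end Hilbert

end Diagonal

section ProductTopology

open Filter Topology

variable {ι E : Type*} [PseudoMetricSpace E]

theorem hasBasis_nhds_pi_ball (l : ι → E) :
    (𝓝 l).HasBasis (fun Iε : Set ι × ℝ => Iε.1.Finite ∧ 0 < Iε.2)
      (fun Iε => Iε.1.pi fun i => Metric.ball (l i) Iε.2) := by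
  rw [nhds_pi]
  refine hasBasis_pi_same_index (fun i => Metric.nhds_basis_ball) fun I r hI hr => ?_
  have : ∀ᶠ δ in 𝓝[>] (0 : ℝ), 0 < δ ∧ ∀ i ∈ I, δ ≤ r i :=
    eventually_mem_nhdsWithin.and ((eventually_all_finite hI).2 fun i hi =>
      eventually_nhdsWithin_of_eventually_nhds (eventually_le_nhds (hr i hi)))
  obtain ⟨δ, hδ, hδr⟩ := this.exists
  exact ⟨δ, hδ, fun i hi => Metric.ball_subset_ball (hδr i hi)⟩

theorem mem_closure_range_pi_iff {κ : Type*} {b : κ → ι → E} {l : ι → E} :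
    l ∈ closure (Set.range b) ↔
      ∀ Γ : Finset ι, ∀ ε > 0, ∃ k, ∑ i ∈ Γ, dist (b k i) (l i) ^ 2 < ε := by
  constructor
  · intro hl Γ ε hε
    have hF : Continuous fun x : ι → E => ∑ i ∈ Γ, dist (x i) (l i) ^ 2 := by fun_prop
    obtain ⟨_, hx, k, rfl⟩ :=
      mem_closure_iff.1 hl _ (isOpen_lt hF continuous_const) (by simpa using hε)
    exact ⟨k, hx⟩
  · rw [mem_closure_iff_nhds_basis (hasBasis_nhds_pi_ball l)]
    rintro h ⟨I, ε⟩ ⟨hI, hε⟩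
    obtain ⟨k, hk⟩ := h hI.toFinset (ε ^ 2) (by positivity)
    refine ⟨b k, ⟨k, rfl⟩, fun i hi => ?_⟩
    have hle := Finset.single_le_sum (f := fun i => dist (b k i) (l i) ^ 2)
      (fun i _ => by positivity) (hI.mem_toFinset.2 hi)
    exact lt_of_pow_lt_pow_left₀ 2 hε.le (hle.trans_lt hk)

end ProductTopology

theorem joint_spectrum_of_diagonal_family_general
    (a : ℤ → ℤ → ℂ)
    (X : ℤ → H →L[ℂ] H)
    (hX : ∀ (i : ℤ) (f : H) (j : ℤ), X i f j = a i j * f j) :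
    {l : ℤ → ℂ | ∀ Γ : Finset ℤ,
        ¬ IsUnit (∑ i ∈ Γ, ((X i - l i • (1 : H →L[ℂ] H)) * star (X i - l i • 1)
            + star (X i - l i • 1) * (X i - l i • 1)))}
      = closure (Set.range fun i : ℤ => fun j : ℤ => a j i) := by
  ext l
  rw [Set.mem_ofPred_eq, mem_closure_range_pi_iff]
  refine forall_congr' fun Γ => ?_
  have hXd (i : ℤ) : IsDiagonalWith (X i) (a i) := hX i
  have hS := IsDiagonalWith.sum fun i (_ : i ∈ Γ) =>
    isDiagonalWith_mul_star_add_star_mul ((hXd i).sub_smul_one (l i))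
  rw [hS.isUnit_iff]
  simp only [← RCLike.ofReal_sum, RCLike.norm_ofReal, ← Finset.mul_sum, dist_eq_norm]
  simp (disch := positivity) only [abs_of_nonneg]
  push Not
  exact ⟨fun h ε hε => (h (2 * ε) (by positivity)).imp fun k hk => by linarith,
    fun h ε hε => (h (ε / 2) (by positivity)).imp fun k hk => by linarith⟩

/-- For a family `a : ℤ → (ℤ → ℂ)` of bounded sequences and the corresponding
diagonal operators `X i = diag (a i)` on ℓ²(ℤ), the joint spectrum of the commuting family
`{X i}` equals the closure in `ℂ^ℤ` (product topology) of `{b i : i ∈ ℤ}` where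
`b i j = a j i`. -/
theorem joint_spectrum_of_diagonal_family
    (a : ℤ → ℤ → ℂ) (ha : ∀ i, ∃ C : ℝ, ∀ j, ‖a i j‖ ≤ C)
    (X : ℤ → H →L[ℂ] H)
    (hX : ∀ (i : ℤ) (f : H) (j : ℤ), X i f j = a i j * f j) :
    {l : ℤ → ℂ | ∀ Γ : Finset ℤ,
        ¬ IsUnit (∑ i ∈ Γ, ((X i - l i • (1 : H →L[ℂ] H)) * star (X i - l i • 1)
            + star (X i - l i • 1) * (X i - l i • 1)))}
      = closure (Set.range fun i : ℤ => fun j : ℤ => a j i) :=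
  joint_spectrum_of_diagonal_family_general a X hX
end

section
/- Let x : ℤ → ℝ be a sequence with 1 ≤ x_i ≤ 2 for all i ∈ ℤ (viewed as complex weights). Then C*({T_x}) = C*({T} ∪ {X_i : i ∈ ℤ}), i.e. the smallest closed unital star-subalgebra of the bounded operators on ℓ²(ℤ) containing the weighted shift T_x coincides with the smallest closed unital star-subalgebra containing the bilateral shift T together with all the diagonal operators X_i. -/
/-- `C*(S)`: the smallest closed unital star-subalgebra of the bounded operators on ℓ²(ℤ)
containing `S`. -/
noncomputable def Cstar (S : Set (H →L[ℂ] H)) : StarSubalgebra ℂ (H →L[ℂ] H) :=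
  (StarAlgebra.adjoin ℂ S).topologicalClosure

/-!
Write `T_x = T X₀`. The shift `T` is unitary and `X₀ ≥ 1`, so `T_x⋆ T_x = X₀²` and `X₀`, the
positive square root of `T_x⋆ T_x`, lies in `C⋆(T_x)`. Being `≥ 1`, `X₀` is invertible, and by
spectral permanence its inverse lies in the closed subalgebra `C⋆(T_x)`; hence so does
`T = T_x X₀⁻¹`. Finally `X_i T = T X_{i+1}` makes each `X_i` a conjugate of `X₀` by a power of `T`.
-/

open scoped ENNReal ComplexOrder

section Reindex
variable {α β E : Type*} [NormedAddCommGroup E] {p : ℝ≥0∞}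

lemma Memℓp.comp_equiv (hp : 0 < p.toReal) (e : α ≃ β) {f : β → E} (hf : Memℓp f p) :
    Memℓp (f ∘ e) p :=
  memℓp_gen ((e.summable_iff (f := fun b => ‖f b‖ ^ p.toReal)).2 (hf.summable hp))

lemma lp.norm_eq_of_apply_eq_comp_equiv (hp : 0 < p.toReal) (e : α ≃ β)
    {f : lp (fun _ : β => E) p} {g : lp (fun _ : α => E) p} (h : ∀ a, g a = f (e a)) :
    ‖g‖ = ‖f‖ := by
  rw [lp.norm_eq_tsum_rpow hp, lp.norm_eq_tsum_rpow hp, ← e.tsum_eq]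
  simp only [h]
end Reindex

section Diagonal
variable {ι : Type*} {D : lp (fun _ : ι => ℂ) 2 →L[ℂ] lp (fun _ : ι => ℂ) 2} {a : ι → ℝ}

lemma lp.nonneg_of_apply_eq_mul (ha : ∀ i, 0 ≤ a i) (hD : ∀ f i, D f i = a i * f i) :
    0 ≤ D := by
  rw [ContinuousLinearMap.nonneg_iff_isPositive, ContinuousLinearMap.isPositive_iff]
  refine ⟨fun f g => ?_, fun f => ?_⟩
  · simp only [ContinuousLinearMap.coe_coe, lp.inner_eq_tsum, RCLike.inner_apply, hD, map_mul,
      Complex.conj_ofReal]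
    exact tsum_congr fun i => by ring
  · have hterm : ∀ i, inner ℂ (D f i) (f i) = ((a i * ‖f i‖ ^ 2 : ℝ) : ℂ) := fun i => by
      rw [RCLike.inner_apply, hD, map_mul, Complex.conj_ofReal, mul_comm, mul_assoc,
        Complex.conj_mul']
      push_cast; ring
    rw [lp.inner_eq_tsum, tsum_congr hterm]
    exact tsum_nonneg fun i => Complex.zero_le_real.2 (mul_nonneg (ha i) (sq_nonneg _))
end Diagonal

section CStar
variable {A : Type*} [CStarAlgebra A]

lemma StarSubalgebra.mem_of_mul_self_mem [PartialOrder A] [StarOrderedRing A]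
    (S : StarSubalgebra ℂ A) [IsClosed (S : Set A)] {b : A} (hb : 0 ≤ b) (hbb : b * b ∈ S) :
    b ∈ S := by
  rw [← CFC.sqrt_mul_self b hb, CFC.sqrt_eq_real_sqrt _ hb.isSelfAdjoint.mul_self_nonneg,
    cfcₙ_eq_cfc]
  exact cfc_mem Real.sqrt hbb

lemma StarSubalgebra.ringInverse_mem (S : StarSubalgebra ℂ A) [IsClosed (S : Set A)] {a : A}
    (ha : a ∈ S) : Ring.inverse a ∈ S := by
  by_cases hunit : IsUnit a
  · obtain ⟨v, hv⟩ := (S.coe_isUnit (a := ⟨a, ha⟩)).mp hunit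
    have : Units.map S.subtype.toMonoidHom v = hunit.unit := Units.ext (by simp [hv])
    rw [← hunit.unit_spec, Ring.inverse_unit, ← this]
    exact (v⁻¹).val.property
  · rw [Ring.inverse_non_unit a hunit]
    exact zero_mem S
end CStar

lemma mem_of_intertwining_unitary {R S : Type*} [Monoid R] [StarMul R] [SetLike S R]
    [MulMemClass S R] {s : S} {u : R} (hu : u ∈ unitary R) (hus : u ∈ s) (hus' : star u ∈ s)
    {X : ℤ → R} (hX : ∀ i, X i * u = u * X (i + 1)) (h0 : X 0 ∈ s) (i : ℤ) : X i ∈ s := by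
  induction i using Int.induction_on with
  | zero => exact h0
  | succ i ih =>
    have : X (i + 1) = star u * X i * u := by
      rw [mul_assoc, hX, ← mul_assoc, Unitary.star_mul_self_of_mem hu, one_mul]
    exact this ▸ mul_mem (mul_mem hus' ih) hus
  | pred i ih =>
    have : X (-i - 1) = u * X (-i) * star u := by
      have h := hX (-i - 1)
      rw [sub_add_cancel] at h
      rw [← h, mul_assoc, Unitary.mul_star_self_of_mem hu, mul_one]
    exact this ▸ mul_mem (mul_mem hus ih) hus'

section Permutation
variable {ι : Type*} {T : lp (fun _ : ι => ℂ) 2 →L[ℂ] lp (fun _ : ι => ℂ) 2}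

lemma lp.mem_unitary_of_apply_eq_comp_equiv (e : ι ≃ ι) (hT : ∀ f i, T f i = f (e i)) :
    T ∈ unitary (lp (fun _ : ι => ℂ) 2 →L[ℂ] lp (fun _ : ι => ℂ) 2) := by
  have hT_isometry (f) : ‖T f‖ = ‖f‖ := lp.norm_eq_of_apply_eq_comp_equiv (by norm_num) e (hT f)
  have hT_surjective : Function.Surjective T := fun g =>
    ⟨⟨g ∘ e.symm, (lp.memℓp g).comp_equiv (by norm_num) _⟩,
      lp.ext (funext fun i => by simp [hT])⟩
  refine IsUnit.mem_unitary_of_star_mul_self (T.isUnit_iff_bijective.mpr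
    ⟨(AddMonoidHomClass.isometry_of_norm T hT_isometry).injective, hT_surjective⟩) ?_
  rw [ContinuousLinearMap.star_eq_adjoint]
  exact T.norm_map_iff_adjoint_comp_self.mp hT_isometry
end Permutation

instance (S : Set (H →L[ℂ] H)) : IsClosed (Cstar S : Set (H →L[ℂ] H)) :=
  StarSubalgebra.isClosed_topologicalClosure _

lemma subset_Cstar (S : Set (H →L[ℂ] H)) : S ⊆ Cstar S :=
  (StarAlgebra.subset_adjoin ℂ S).trans (StarSubalgebra.le_topologicalClosure _)

lemma Cstar_le {S : Set (H →L[ℂ] H)} {B : StarSubalgebra ℂ (H →L[ℂ] H)}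
    [hB : IsClosed (B : Set (H →L[ℂ] H))] (h : S ⊆ B) : Cstar S ≤ B :=
  StarSubalgebra.topologicalClosure_minimal (StarAlgebra.adjoin_le h) hB

/-- For weights `x : ℤ → ℝ` with `1 ≤ x i ≤ 2`, the C*-algebra generated by the
weighted shift `T_x` coincides with the C*-algebra generated by the bilateral shift `T`
together with all the diagonal operators `X i = diag (j ↦ x (i+j))`. -/
theorem cstar_weighted_shift_eq_cstar_shift_and_diagonals
    (x : ℤ → ℝ) (hx : ∀ i, 1 ≤ x i ∧ x i ≤ 2)
    (Tx T : H →L[ℂ] H) (X : ℤ → H →L[ℂ] H)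
    (hTx : ∀ (f : H) (n : ℤ), Tx f n = (x (n - 1) : ℂ) * f (n - 1))
    (hT : ∀ (f : H) (n : ℤ), T f n = f (n - 1))
    (hX : ∀ (i : ℤ) (f : H) (j : ℤ), X i f j = (x (i + j) : ℂ) * f j) :
    Cstar {Tx} = Cstar ({T} ∪ Set.range X) := by
  have hTu := lp.mem_unitary_of_apply_eq_comp_equiv (Equiv.subRight 1) hT
  have hTx_eq : Tx = T * X 0 := by ext f n; simp [hTx, hT, hX]
  have hX_shift (i : ℤ) : X i * T = T * X (i + 1) := by ext f n; simp [hT, hX]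
  have hX0_ge : 1 ≤ X 0 := by
    rw [← sub_nonneg]
    exact lp.nonneg_of_apply_eq_mul (a := fun i => x i - 1) (fun i => by linarith [hx i])
      fun f i => by simp [hX, sub_mul]
  have hX0_sa : IsSelfAdjoint (X 0) := (zero_le_one.trans hX0_ge).isSelfAdjoint
  have hTxTx : star Tx * Tx = X 0 * X 0 := by
    rw [hTx_eq, star_mul, hX0_sa.star_eq, mul_assoc, ← mul_assoc (star T),
      Unitary.star_mul_self_of_mem hTu, one_mul]
  set A := Cstar {Tx}
  have hTxA : Tx ∈ A := subset_Cstar _ rfl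
  have hX0A : X 0 ∈ A := A.mem_of_mul_self_mem (zero_le_one.trans hX0_ge)
    (hTxTx ▸ mul_mem (star_mem hTxA) hTxA)
  have hTA : T ∈ A := by
    have : T = Tx * Ring.inverse (X 0) := by
      rw [hTx_eq, mul_assoc, Ring.mul_inverse_cancel _ (CStarAlgebra.isUnit_of_le 1 hX0_ge),
        mul_one]
    exact this ▸ mul_mem hTxA (A.ringInverse_mem hX0A)
  have hXA := mem_of_intertwining_unitary hTu hTA (star_mem hTA) hX_shift hX0A
  refine le_antisymm (Cstar_le ?_) (Cstar_le ?_)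
  · rw [Set.singleton_subset_iff, hTx_eq]
    exact mul_mem (subset_Cstar _ (.inl rfl)) (subset_Cstar _ (.inr ⟨0, rfl⟩))
  · rintro _ (rfl | ⟨i, rfl⟩)
    exacts [hTA, hXA i]
end

section
/- Let K be a Cantor space and let α, β : K ≃ₜ K be homeomorphisms with α ∘ β = β ∘ α and α minimal. Let φ_a and φ_b be the homeomorphisms of the product space K × ∂F₂ given by φ_a(x, s) = (α(x), ∂_a(s)) and φ_b(x, s) = (β(x), ∂_b(s)), and let G be the subgroup of the homeomorphism group of K × ∂F₂ generated by φ_a and φ_b. Then the action of G on K × ∂F₂ is minimal: for every point p ∈ K × ∂F₂ the orbit {g(p) : g ∈ G} is dense in K × ∂F₂. -/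
/-- The alphabet `{a, a⁻¹, b, b⁻¹}`, encoded as `Fin 4` with `a = 0`, `a⁻¹ = 1`, `b = 2`,
`b⁻¹ = 3`. -/
abbrev A4 : Type := Fin 4

/-- The formal-inverse involution on the alphabet, swapping `a ↔ a⁻¹` and `b ↔ b⁻¹`. -/
def inv4 : A4 → A4 := ![1, 0, 3, 2]

/-- The Gromov boundary `∂F₂` of the free group on two generators, modelled as the space of
infinite reduced words over `{a, a⁻¹, b, b⁻¹}`, topologized as a subspace of `A4 ^ ℕ`. -/
abbrev Bdry : Type := {s : ℕ → A4 // ∀ n, s (n + 1) ≠ inv4 (s n)}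

/-- The left-multiplication action of the letter `ℓ` on raw infinite words: cancel the first
letter if it is `ℓ⁻¹`, otherwise prepend `ℓ`. -/
def rawAct (ℓ : A4) (s : ℕ → A4) : ℕ → A4 :=
  if s 0 = inv4 ℓ then fun n => s (n + 1)
  else fun n => Nat.casesOn n ℓ fun m => s m

/-!
Given `p = (x, s)` and a basic open set `U × {r | r agrees with q on its first m letters}`, act
by the word `w = t · b₁ · aᵏ · b₂`, where `t = q₀ ⋯ q_{m-1}` and `b₁, b₂ ∈ {b, b⁻¹}` are chosen so
that `t · b₁` and `b₂ · s` are reduced. Since `a`- and `b`-letters never cancel, the boundary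
coordinate of `w · p` is the concatenation `w s`, which starts with `t`; its `K`-coordinate is
`t(b₁(αᵏ(b₂ x)))`, and minimality of `α` yields `k` with this in `U`. The exponent must be
nonzero, or `b₁ b₂` could cancel; such a `k` exists because in a `T1` space without isolated
points a dense orbit stays dense after removing one point.
-/

open Set

lemma inv4_involutive : Function.Involutive inv4 := by
  show ∀ ℓ, inv4 (inv4 ℓ) = ℓ
  decide

lemma inv4_ne_self (ℓ : A4) : inv4 ℓ ≠ ℓ := by revert ℓ; decide

lemma ne_inv4_of_lt_two_of_two_le {a b : A4} (ha : a.val < 2) (hb : 2 ≤ b.val) :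
    b ≠ inv4 a ∧ a ≠ inv4 b := by
  revert a b; decide

lemma exists_two_le_ne (x : A4) : ∃ b : A4, 2 ≤ b.val ∧ b ≠ x := by revert x; decide

lemma rawAct_inv4_rawAct (ℓ : A4) (s : Bdry) : rawAct (inv4 ℓ) (rawAct ℓ s) = s := by
  by_cases h : (s : ℕ → A4) 0 = inv4 ℓ
  · have h1 : (s : ℕ → A4) 1 ≠ inv4 (inv4 ℓ) := h ▸ s.2 0
    ext (_ | n) <;> simp [rawAct, h, h1]
  · ext (_ | n) <;> simp [rawAct, h, inv4_involutive ℓ]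

lemma rawAct_of_ne {ℓ : A4} {s : ℕ → A4} (h : s 0 ≠ inv4 ℓ) :
    rawAct ℓ s = Stream'.cons ℓ s := by
  ext (_ | n) <;> simp [rawAct, h] <;> rfl

def rawActList (w : List A4) (s : ℕ → A4) : ℕ → A4 := w.foldr rawAct s

abbrev IsReducedWord (w : List A4) : Prop := w.IsChain fun x y => y ≠ inv4 x

lemma rawActList_eq_append {w : List A4} {s : ℕ → A4} (h : IsReducedWord (w ++ [s 0])) :
    rawActList w s = w ++ₛ s := by
  induction w with
  | nil => rfl
  | cons ℓ w ih =>
    rw [IsReducedWord, List.cons_append, List.isChain_cons] at h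
    have hhead : (w ++ₛ s) 0 ≠ inv4 ℓ := by
      rcases w with _ | ⟨c, w⟩ <;> exact h.1 _ rfl
    show rawAct ℓ (rawActList w s) = _
    rw [ih h.2, rawAct_of_ne hhead]
    rfl

lemma isReducedWord_take {s : Stream' A4} (hs : ∀ n, s.get (n + 1) ≠ inv4 (s.get n)) (m : ℕ) :
    IsReducedWord (s.take m) :=
  List.isChain_iff_getElem.2 fun i hi => by
    rw [Stream'.take_get, Stream'.take_get]
    exact hs i

def aPowWord (k : ℤ) : List A4 := List.replicate k.natAbs (if 0 ≤ k then 0 else 1)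

lemma exists_isReducedWord_sandwich_aPowWord {t : List A4} (ht : IsReducedWord t) (y : A4) :
    ∃ b₁ b₂ : A4, ∀ k : ℤ, k ≠ 0 → IsReducedWord (t ++ (b₁ :: aPowWord k ++ [b₂, y])) := by
  obtain ⟨b₁, hb₁, hb₁t⟩ := exists_two_le_ne (inv4 (t.getLastD 0))
  obtain ⟨b₂, hb₂, hb₂y⟩ := exists_two_le_ne (inv4 y)
  refine ⟨b₁, b₂, fun k hk => ?_⟩
  obtain ⟨n, hn⟩ : ∃ n, k.natAbs = n + 1 := Nat.exists_eq_add_one.2 (Int.natAbs_pos.2 hk)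
  set c : A4 := if 0 ≤ k then 0 else 1
  have hc : c.val < 2 := by unfold c; split_ifs <;> decide
  have hblock : aPowWord k = List.replicate (n + 1) c := by rw [aPowWord, hn]
  have hmid : IsReducedWord (List.replicate (n + 1) c ++ [b₂]) :=
    (List.isChain_replicate_of_rel _ (inv4_ne_self c).symm).append (List.isChain_singleton _)
      (by simpa [List.getLast?_replicate] using (ne_inv4_of_lt_two_of_two_le hc hb₂).1)
  rw [hblock, IsReducedWord, List.cons_append, List.isChain_split, List.isChain_cons_split]
  refine ⟨ht.append (List.isChain_singleton _) ?_, hmid.cons ?_, List.isChain_pair.2 ?_⟩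
  · intro x hx z hz
    rw [List.getLastD_eq_getLast?, Option.mem_def.1 hx] at hb₁t
    simpa [Option.mem_some_iff.1 hz] using hb₁t
  · simpa [List.head?_replicate] using (ne_inv4_of_lt_two_of_two_le hc hb₁).2
  · exact fun h => hb₂y (by rw [h, inv4_involutive])

lemma take_append_mem_cylinder {α : Type*} (q s : Stream' α) (m : ℕ) (l : List α) :
    Stream'.take m q ++ l ++ₛ s ∈ PiNat.cylinder q m := by
  refine PiNat.mem_cylinder_iff.2 fun i hi => ?_
  rw [Stream'.append_append_stream]
  exact (Stream'.get_append_left _ _ _ (by simpa using hi)).trans (Stream'.take_get _ _ _ _)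

lemma exists_cylinder_subset {X : Type*} [TopologicalSpace X] [DiscreteTopology X]
    {S : Set (ℕ → X)} {V : Set S} (hV : IsOpen V) {q : S} (hq : q ∈ V) :
    ∃ m, Subtype.val ⁻¹' PiNat.cylinder (q : ℕ → X) m ⊆ V := by
  obtain ⟨W, hW, rfl⟩ := isOpen_induced_iff.1 hV
  obtain ⟨_, ⟨y, m, rfl⟩, hqy, hyW⟩ :=
    (PiNat.isTopologicalBasis_cylinders fun _ => X).mem_nhds_iff.1 (hW.mem_nhds hq)
  exact ⟨m, preimage_mono (PiNat.mem_cylinder_iff_eq.1 hqy ▸ hyW)⟩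

lemma exists_ne_zero_zpow_mem {X : Type*} [TopologicalSpace X] [T1Space X] [PerfectSpace X]
    {f : Equiv.Perm X} {z : X} (hz : Dense (range fun n : ℤ => (f ^ n) z))
    {U : Set X} (hU : IsOpen U) (hne : U.Nonempty) : ∃ k : ℤ, k ≠ 0 ∧ (f ^ k) z ∈ U := by
  obtain ⟨_, hyU, ⟨k, rfl⟩, hkz⟩ := (hz.sdiff_singleton z).inter_open_nonempty U hU hne
  exact ⟨k, by rintro rfl; exact hkz rfl, hyU⟩

lemma Homeomorph.toEquiv_zpow {X : Type*} [TopologicalSpace X] (f : X ≃ₜ X) (n : ℤ) :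
    (f ^ n).toEquiv = f.toEquiv ^ n :=
  map_zpow (MonoidHom.mk' Homeomorph.toEquiv fun _ _ => rfl) f n

section
variable {K : Type*} [TopologicalSpace K]

def letterHomeo (α β : K ≃ₜ K) : A4 → K ≃ₜ K := ![α, α⁻¹, β, β⁻¹]

def wordHomeo (α β : K ≃ₜ K) (w : List A4) : K ≃ₜ K := (w.map (letterHomeo α β)).prod

@[simp] lemma wordHomeo_nil (α β : K ≃ₜ K) : wordHomeo α β [] = 1 := rfl

@[simp] lemma wordHomeo_cons (α β : K ≃ₜ K) (ℓ : A4) (w : List A4) :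
    wordHomeo α β (ℓ :: w) = letterHomeo α β ℓ * wordHomeo α β w := List.prod_cons

@[simp] lemma wordHomeo_append (α β : K ≃ₜ K) (u v : List A4) :
    wordHomeo α β (u ++ v) = wordHomeo α β u * wordHomeo α β v := by
  simp [wordHomeo]

@[simp] lemma wordHomeo_aPowWord (α β : K ≃ₜ K) (k : ℤ) :
    wordHomeo α β (aPowWord k) = α ^ k := by
  cases k <;> simp [wordHomeo, aPowWord, letterHomeo, List.map_replicate, List.prod_replicate,
    zpow_negSucc]

def ActsBy (g : Equiv.Perm (K × Bdry)) (γ : K ≃ₜ K) (σ : (ℕ → A4) → ℕ → A4) : Prop :=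
  ∀ p : K × Bdry, (g p).1 = γ p.1 ∧ ((g p).2 : ℕ → A4) = σ p.2

lemma ActsBy.mul {g h : Equiv.Perm (K × Bdry)} {γ δ : K ≃ₜ K} {σ τ : (ℕ → A4) → ℕ → A4}
    (hg : ActsBy g γ σ) (hh : ActsBy h δ τ) : ActsBy (g * h) (γ * δ) (σ ∘ τ) := fun p =>
  ⟨by simp [(hg _).1, (hh p).1], by simp [(hg _).2, (hh p).2]⟩

lemma ActsBy.inv_rawAct {g : Equiv.Perm (K × Bdry)} {γ : K ≃ₜ K} {ℓ : A4}
    (hg : ActsBy g γ (rawAct ℓ)) : ActsBy g⁻¹ γ⁻¹ (rawAct (inv4 ℓ)) := fun p => by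
  obtain ⟨h1, h2⟩ := hg (g⁻¹ p)
  rw [show g (g⁻¹ p) = p from g.apply_symm_apply p] at h1 h2
  exact ⟨by simp [h1], by rw [h2, rawAct_inv4_rawAct]⟩

variable {α β : K ≃ₜ K} {φa φb : (K × Bdry) ≃ₜ (K × Bdry)}

lemma exists_mem_closure_actsBy_letterHomeo (hφa : ActsBy φa.toEquiv α (rawAct 0))
    (hφb : ActsBy φb.toEquiv β (rawAct 2)) (ℓ : A4) :
    ∃ g ∈ Subgroup.closure ({φa.toEquiv, φb.toEquiv} : Set (Equiv.Perm (K × Bdry))),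
      ActsBy g (letterHomeo α β ℓ) (rawAct ℓ) := by
  have ha := Subgroup.subset_closure (k := {φa.toEquiv, φb.toEquiv}) (mem_insert _ _)
  have hb := Subgroup.subset_closure (k := {φa.toEquiv, φb.toEquiv}) (mem_insert_of_mem _ rfl)
  fin_cases ℓ
  · exact ⟨_, ha, hφa⟩
  · exact ⟨_, inv_mem ha, hφa.inv_rawAct⟩
  · exact ⟨_, hb, hφb⟩
  · exact ⟨_, inv_mem hb, hφb.inv_rawAct⟩

lemma exists_mem_closure_actsBy_wordHomeo (hφa : ActsBy φa.toEquiv α (rawAct 0))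
    (hφb : ActsBy φb.toEquiv β (rawAct 2)) (w : List A4) :
    ∃ g ∈ Subgroup.closure ({φa.toEquiv, φb.toEquiv} : Set (Equiv.Perm (K × Bdry))),
      ActsBy g (wordHomeo α β w) (rawActList w) := by
  induction w with
  | nil => exact ⟨1, one_mem _, fun p => ⟨rfl, rfl⟩⟩
  | cons ℓ w ih =>
    obtain ⟨g, hg, hgw⟩ := ih
    obtain ⟨h, hh, hhℓ⟩ := exists_mem_closure_actsBy_letterHomeo hφa hφb ℓ
    exact ⟨h * g, mul_mem hh hg, wordHomeo_cons α β ℓ w ▸ hhℓ.mul hgw⟩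

end

theorem diagonal_action_on_product_with_boundary_minimal_general
    {K : Type*} [TopologicalSpace K]
    [TotallyDisconnectedSpace K]
    (hperf : Perfect (Set.univ : Set K))
    (α β : K ≃ₜ K)
    (hmin : ∀ x : K, Dense (Set.range fun n : ℤ => (α.toEquiv ^ n) x))
    (φa φb : (K × Bdry) ≃ₜ (K × Bdry))
    (hφa : ∀ p : K × Bdry,
      (φa p).1 = α p.1 ∧ ((φa p).2 : ℕ → A4) = rawAct 0 (p.2 : ℕ → A4))
    (hφb : ∀ p : K × Bdry,
      (φb p).1 = β p.1 ∧ ((φb p).2 : ℕ → A4) = rawAct 2 (p.2 : ℕ → A4)) :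
    ∀ p : K × Bdry,
      Dense {q : K × Bdry |
        ∃ g ∈ Subgroup.closure ({φa.toEquiv, φb.toEquiv} : Set (Equiv.Perm (K × Bdry))),
          g p = q} := by
  have : PerfectSpace K := ⟨hperf.acc⟩
  intro p
  rw [dense_iff_inter_open]
  rintro O hO ⟨q, hqO⟩
  obtain ⟨U, V, hU, hV, hqU, hqV, hUV⟩ := isOpen_prod_iff.1 hO q.1 q.2 hqO
  obtain ⟨m, hm⟩ := exists_cylinder_subset hV hqV
  set t := Stream'.take m (q.2 : ℕ → A4)
  obtain ⟨b₁, b₂, hred⟩ :=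
    exists_isReducedWord_sandwich_aPowWord (isReducedWord_take q.2.2 m) (p.2.1 0)
  set F := wordHomeo α β t * letterHomeo α β b₁
  obtain ⟨k, hk, hkU⟩ := exists_ne_zero_zpow_mem (hmin (letterHomeo α β b₂ p.1))
    (hU.preimage F.continuous) ⟨F⁻¹ q.1, by simpa using hqU⟩
  obtain ⟨g, hg, hgw⟩ :=
    exists_mem_closure_actsBy_wordHomeo hφa hφb (t ++ (b₁ :: aPowWord k ++ [b₂]))
  refine ⟨g p, hUV ⟨?_, hm ?_⟩, g, hg, rfl⟩
  · rw [(hgw p).1]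
    simpa [F, mul_assoc, ← Homeomorph.toEquiv_zpow] using hkU
  · rw [mem_preimage, (hgw p).2, rawActList_eq_append (by simpa using hred k hk)]
    exact take_append_mem_cylinder _ _ m _

/-- Let `K` be a Cantor space, `α β : K ≃ₜ K` commuting homeomorphisms with `α`
minimal, and let `φa, φb` be the homeomorphisms of `K × ∂F₂` given by
`φa(x, s) = (α x, ∂ₐ s)` and `φb(x, s) = (β x, ∂_b s)`. Then the action of the subgroup
generated by `φa` and `φb` on `K × ∂F₂` is minimal: every orbit is dense. -/
theorem diagonal_action_on_product_with_boundary_minimal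
    {K : Type*} [TopologicalSpace K] [CompactSpace K] [TopologicalSpace.MetrizableSpace K]
    [TotallyDisconnectedSpace K] [Nonempty K]
    (hperf : Perfect (Set.univ : Set K))
    (α β : K ≃ₜ K)
    (hcomm : ∀ x : K, α (β x) = β (α x))
    (hmin : ∀ x : K, Dense (Set.range fun n : ℤ => (α.toEquiv ^ n) x))
    (φa φb : (K × Bdry) ≃ₜ (K × Bdry))
    (hφa : ∀ p : K × Bdry,
      (φa p).1 = α p.1 ∧ ((φa p).2 : ℕ → A4) = rawAct 0 (p.2 : ℕ → A4))
    (hφb : ∀ p : K × Bdry,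
      (φb p).1 = β p.1 ∧ ((φb p).2 : ℕ → A4) = rawAct 2 (p.2 : ℕ → A4)) :
    ∀ p : K × Bdry,
      Dense {q : K × Bdry |
        ∃ g ∈ Subgroup.closure ({φa.toEquiv, φb.toEquiv} : Set (Equiv.Perm (K × Bdry))),
          g p = q} :=
  diagonal_action_on_product_with_boundary_minimal_general hperf α β hmin φa φb hφa hφb
end

section
/- Let K be a Cantor space and let α : K ≃ₜ K be a minimal homeomorphism. Consider the additive group LocallyConstant K ℤ of locally constant (equivalently, continuous) integer-valued functions on K, and the group endomorphism Φ : LocallyConstant K ℤ → LocallyConstant K ℤ given by Φ(f) = f ∘ α − f. Then the range of Φ is not a finitely generated additive group. -/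
/-!
A locally constant function invariant under `α` is constant along a dense orbit, hence constant,
so the kernel of `Φ` is the cyclic group of constant functions. If the range of `Φ` were finitely
generated, so would be `LocallyConstant K ℤ`. But finitely many locally constant functions on a
compact space take only finitely many tuples of values, and since clopen sets separate the points
of `K`, those tuples would separate the points: `K` would be finite, which a nonempty perfect
space is not.
-/

open Set

theorem AddMonoidHom.addGroupFG_of_fg_range_of_fg_ker {M N : Type*} [AddCommGroup M]
    [AddCommGroup N] (φ : M →+ N) (hrange : φ.range.FG) (hker : φ.ker.FG) : AddGroup.FG M := by
  rw [← Module.Finite.iff_addGroup_fg]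
  refine ⟨Submodule.fg_of_fg_map_of_fg_inf_ker φ.toIntLinearMap ?_ ?_⟩
  · rwa [Submodule.map_top, Submodule.fg_iff_addSubgroup_fg]
  · rwa [top_inf_eq, Submodule.fg_iff_addSubgroup_fg]

theorem AddSubgroup.fg_zmultiples {G : Type*} [AddGroup G] (g : G) : (zmultiples g).FG :=
  ⟨{g}, by rw [Finset.coe_singleton, zmultiples_eq_closure]⟩

theorem infinite_of_perfect_univ {K : Type*} [TopologicalSpace K] [T1Space K] [Nonempty K]
    (h : Perfect (univ : Set K)) : Infinite K := by
  rw [← not_finite_iff_infinite]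
  intro
  obtain ⟨x⟩ := ‹Nonempty K›
  obtain ⟨y, ⟨hyx, -⟩, hne⟩ := accPt_iff_nhds.mp (h.acc x (mem_univ x)) {x}
    (isOpen_discrete {x} |>.mem_nhds rfl)
  exact hne hyx

theorem Equiv.Perm.apply_zpow_apply_eq {α β : Type*} {σ : Equiv.Perm α} {f : α → β}
    (h : ∀ x, f (σ x) = f x) (n : ℤ) (x : α) : f ((σ ^ n) x) = f x := by
  have hper : Function.Periodic (fun n : ℤ => f ((σ ^ n) x)) 1 := fun n => by
    simp only [add_comm n, zpow_one_add, Perm.mul_apply, h]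
  simpa using hper.zsmul n 0

theorem Continuous.apply_eq_of_dense_orbit {K Y : Type*} [TopologicalSpace K] [TopologicalSpace Y]
    [T1Space Y] {σ : Equiv.Perm K} {x₀ : K} (hx₀ : Dense (range fun n : ℤ => (σ ^ n) x₀))
    {f : K → Y} (hf : Continuous f) (hinv : ∀ x, f (σ x) = f x) (y : K) : f y = f x₀ := by
  have horbit : range (fun n : ℤ => (σ ^ n) x₀) ⊆ f ⁻¹' {f x₀} := by
    rintro - ⟨n, rfl⟩
    exact σ.apply_zpow_apply_eq hinv n x₀
  exact (isClosed_singleton.preimage hf).closure_subset_iff.mpr horbit (hx₀ y)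

namespace LocallyConstant

variable {K : Type*} [TopologicalSpace K]

theorem mem_zmultiples_one_of_dense_orbit {σ : Equiv.Perm K} {x₀ : K}
    (hx₀ : Dense (range fun n : ℤ => (σ ^ n) x₀)) {f : LocallyConstant K ℤ}
    (hinv : ∀ x, f (σ x) = f x) : f ∈ AddSubgroup.zmultiples 1 :=
  ⟨f x₀, by
    ext y
    rw [coe_smul, Pi.smul_apply, coe_one, Pi.one_apply, smul_eq_mul, mul_one,
      f.continuous.apply_eq_of_dense_orbit hx₀ hinv y]⟩

theorem finite_of_addGroupFG [CompactSpace K] [TotallySeparatedSpace K]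
    [AddGroup.FG (LocallyConstant K ℤ)] : Finite K := by
  obtain ⟨S, hS⟩ := AddGroup.fg_def.mp ‹_›
  let values : K → S → ℤ := fun x s => s.1 x
  have hvalues : Function.Injective values := by
    intro x y hxy
    by_contra hne
    obtain ⟨U, hU, hxU, hyU⟩ := exists_isClopen_of_totally_separated hne
    have heval : evalAddMonoidHom (Y := ℤ) x = evalAddMonoidHom y :=
      AddMonoidHom.eq_of_eqOn_dense hS fun s hs => congrFun hxy ⟨s, hs⟩
    have hcharFn := DFunLike.congr_fun heval (charFn ℤ hU)
    rw [evalAddMonoidHom_apply, evalAddMonoidHom_apply, (charFn_eq_one ℤ x hU).mpr hxU,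
      (charFn_eq_zero ℤ y hU).mpr hyU] at hcharFn
    exact one_ne_zero hcharFn
  have : Finite (range values) := by
    refine (Finite.pi fun s : S => s.1.range_finite).subset ?_
    rintro - ⟨x, rfl⟩
    simp [values]
  exact Finite.of_injective_finite_range hvalues

end LocallyConstant

/-- Let `K` be a Cantor space and `α : K ≃ₜ K` a minimal homeomorphism. Then the
range of the endomorphism `Φ : f ↦ f ∘ α − f` of the group `LocallyConstant K ℤ` is not a
finitely generated additive group. -/
theorem range_coboundary_map_not_fg
    {K : Type*} [TopologicalSpace K] [CompactSpace K] [TopologicalSpace.MetrizableSpace K]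
    [TotallyDisconnectedSpace K] [Nonempty K]
    (hperf : Perfect (Set.univ : Set K))
    (α : K ≃ₜ K)
    (hmin : ∀ x : K, Dense (Set.range fun n : ℤ => (α.toEquiv ^ n) x))
    (Φ : LocallyConstant K ℤ →+ LocallyConstant K ℤ)
    (hΦ : ∀ (f : LocallyConstant K ℤ) (x : K), Φ f x = f (α x) - f x) :
    ¬ (AddMonoidHom.range Φ).FG := by
  intro hrange
  obtain ⟨x₀⟩ := ‹Nonempty K›
  have hker : Φ.ker = AddSubgroup.zmultiples 1 := by
    refine le_antisymm (fun f hf => ?_) (AddSubgroup.zmultiples_le_of_mem ?_)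
    · refine LocallyConstant.mem_zmultiples_one_of_dense_orbit (hmin x₀) fun x => ?_
      exact sub_eq_zero.mp (by simpa [AddMonoidHom.mem_ker.mp hf] using (hΦ f x).symm)
    · ext x
      simp [hΦ]
  have : AddGroup.FG (LocallyConstant K ℤ) :=
    Φ.addGroupFG_of_fg_range_of_fg_ker hrange <| hker ▸ AddSubgroup.fg_zmultiples 1
  have : Infinite K := infinite_of_perfect_univ hperf
  have : Finite K := LocallyConstant.finite_of_addGroupFG
  exact not_finite K
end

section
/- Let x : ℤ → ℝ be a sequence with 1 ≤ x_i ≤ 2 for all i, let X_i := diag(j ↦ x(i+j)) for i ∈ ℤ, and let Σ ⊆ ℝ^ℤ be the closure, in the product topology, of the set of shifts {(j ↦ x(i+j)) : i ∈ ℤ} (a compact space, being a closed subset of [1,2]^ℤ). Then there is a unital star-algebra isomorphism Φ from the C*-algebra C(Σ, ℂ) of continuous complex-valued functions on Σ onto C*({X_i : i ∈ ℤ}) such that for every i ∈ ℤ, Φ sends the i-th coordinate evaluation function (s ↦ s(i)) to X_i. -/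
/-- The closure in `ℝ^ℤ` (product topology) of the set of shifts of `x`. -/
noncomputable def shiftHull (x : ℤ → ℝ) : Set (ℤ → ℝ) :=
  closure (Set.range fun i : ℤ => fun j : ℤ => x (i + j))

/-- The `i`-th coordinate evaluation, as a continuous complex-valued function on the
shift hull of `x`. -/
noncomputable def coordFn (x : ℤ → ℝ) (i : ℤ) : C(shiftHull x, ℂ) :=
  ⟨fun s => ((s : ℤ → ℝ) i : ℂ),
    Complex.continuous_ofReal.comp ((continuous_apply i).comp continuous_subtype_val)⟩

open scoped ENNReal

namespace lp

variable {ι 𝕜 : Type*} [RCLike 𝕜]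

variable (ι 𝕜) in
noncomputable def diagonal :
    lp (fun _ : ι => 𝕜) ∞ →⋆ₐ[𝕜] (lp (fun _ : ι => 𝕜) 2 →L[𝕜] lp (fun _ : ι => 𝕜) 2) where
  toFun := holderL (K := 1) 2 (fun _ => ContinuousLinearMap.mul 𝕜 𝕜)
    fun _ => ContinuousLinearMap.opNorm_mul_le _ _
  map_one' := by ext f i; simp [holderL]
  map_mul' a b := by ext f i; simp [holderL, mul_assoc]
  map_zero' := map_zero _
  map_add' := map_add _
  commutes' c := by ext f i; simp [holderL, Algebra.algebraMap_eq_smul_one]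
  map_star' a := by
    rw [ContinuousLinearMap.star_eq_adjoint, ContinuousLinearMap.eq_adjoint_iff]
    intro f g
    simp only [lp.inner_eq_tsum]
    exact tsum_congr fun i => by simp [holderL, mul_assoc, mul_left_comm]

@[simp]
lemma diagonal_apply_apply (a : lp (fun _ : ι => 𝕜) ∞) (f : lp (fun _ : ι => 𝕜) 2) (i : ι) :
    diagonal ι 𝕜 a f i = a i * f i := rfl

lemma diagonal_injective : Function.Injective (diagonal ι 𝕜) := by
  classical
  intro a b hab
  ext i
  simpa [lp.single_apply_self] using congrArg (fun T => T (lp.single 2 i (1 : 𝕜)) i) hab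

end lp

namespace ContinuousMap

variable {ι Y 𝕜 : Type*} [TopologicalSpace Y] [CompactSpace Y] [RCLike 𝕜]

variable (𝕜) in
noncomputable def compLpInfty (p : ι → Y) : C(Y, 𝕜) →⋆ₐ[𝕜] lp (fun _ : ι => 𝕜) ∞ where
  toFun f := ⟨f ∘ p, memℓp_infty ⟨‖f‖, by rintro _ ⟨i, rfl⟩; exact f.norm_coe_le_norm (p i)⟩⟩
  map_one' := rfl
  map_mul' _ _ := rfl
  map_zero' := rfl
  map_add' _ _ := rfl
  commutes' _ := rfl
  map_star' _ := rfl

@[simp]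
lemma compLpInfty_apply_apply (p : ι → Y) (f : C(Y, 𝕜)) (i : ι) :
    compLpInfty 𝕜 p f i = f (p i) :=
  rfl

lemma compLpInfty_injective {p : ι → Y} (hp : DenseRange p) :
    Function.Injective (compLpInfty 𝕜 p) := fun f g hfg =>
  ContinuousMap.ext <| congrFun <|
    hp.equalizer f.continuous g.continuous <| funext fun i => congrArg (· i) hfg

end ContinuousMap

lemma StarAlgHom.range_eq_topologicalClosure_adjoin_image {A B : Type*} [CStarAlgebra A]
    [CStarAlgebra B] (φ : A →⋆ₐ[ℂ] B) (hφ : Function.Injective φ) {s : Set A}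
    (hs : (StarAlgebra.adjoin ℂ s).topologicalClosure = ⊤) :
    φ.range = (StarAlgebra.adjoin ℂ (φ '' s)).topologicalClosure := by
  have hφ' : Isometry φ := NonUnitalStarAlgHom.isometry φ hφ
  rw [StarAlgHom.range_eq_map_top, ← hs, ← StarAlgHom.map_adjoin,
    StarSubalgebra.topologicalClosure_map _ _ hφ'.isClosedEmbedding.isClosedMap hφ'.continuous]

lemma StarAlgHom.exists_starAlgEquiv_of_range_eq {R A B : Type*} [CommSemiring R] [StarRing R]
    [Semiring A] [Algebra R A] [StarRing A] [Semiring B] [Algebra R B] [StarRing B]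
    [StarModule R B]
    (φ : A →⋆ₐ[R] B) (hφ : Function.Injective φ) {T : StarSubalgebra R B} (hT : φ.range = T) :
    ∃ Ψ : A ≃⋆ₐ[R] T, ∀ a, (Ψ a : B) = φ a := by
  subst hT
  exact ⟨StarAlgEquiv.ofInjective φ hφ, fun _ => rfl⟩

lemma isCompact_shiftHull {x : ℤ → ℝ} {a b : ℝ} (hx : ∀ i, x i ∈ Set.Icc a b) :
    IsCompact (shiftHull x) :=
  (isCompact_univ_pi fun _ => isCompact_Icc).of_isClosed_subset isClosed_closure <|
    closure_minimal (by rintro _ ⟨i, rfl⟩ j -; exact hx (i + j))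
      (isClosed_set_pi fun _ _ => isClosed_Icc)

def shiftPoint (x : ℤ → ℝ) (i : ℤ) : shiftHull x :=
  ⟨fun j => x (i + j), subset_closure ⟨i, rfl⟩⟩

lemma denseRange_shiftPoint (x : ℤ → ℝ) : DenseRange (shiftPoint x) :=
  Subtype.dense_iff.2 <| by rw [← Set.range_comp]; exact subset_rfl

lemma topologicalClosure_adjoin_range_coordFn (x : ℤ → ℝ) [CompactSpace (shiftHull x)] :
    (StarAlgebra.adjoin ℂ (Set.range (coordFn x))).topologicalClosure = ⊤ := by
  refine ContinuousMap.starSubalgebra_topologicalClosure_eq_top_of_separatesPoints _ ?_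
  intro s t hst
  obtain ⟨i, hi⟩ := Function.ne_iff.1 (Subtype.coe_ne_coe.2 hst)
  exact ⟨coordFn x i, ⟨coordFn x i, StarAlgebra.subset_adjoin ℂ _ ⟨i, rfl⟩, rfl⟩,
    fun h => hi (Complex.ofReal_injective h)⟩

/-- For weights `1 ≤ x i ≤ 2` and diagonal operators `X i = diag (j ↦ x (i+j))`,
there is a unital star-algebra isomorphism of `C(Σ, ℂ)` (where `Σ` is the closure of the set
of shifts of `x` in the product topology) onto `C*({X i : i ∈ ℤ})` sending the `i`-th
coordinate evaluation to `X i`. -/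
theorem continuousFunctions_shiftHull_iso_cstar_diagonals
    (x : ℤ → ℝ) (hx : ∀ i, 1 ≤ x i ∧ x i ≤ 2)
    (X : ℤ → H →L[ℂ] H)
    (hX : ∀ (i : ℤ) (f : H) (j : ℤ), X i f j = (x (i + j) : ℂ) * f j) :
    ∃ Φ : C(shiftHull x, ℂ) ≃⋆ₐ[ℂ] Cstar (Set.range X),
      ∀ i : ℤ, (Φ (coordFn x i) : H →L[ℂ] H) = X i := by
  have : CompactSpace (shiftHull x) := isCompact_iff_compactSpace.1 (isCompact_shiftHull hx)
  let Φ : C(shiftHull x, ℂ) →⋆ₐ[ℂ] (H →L[ℂ] H) :=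
    (lp.diagonal ℤ ℂ).comp (ContinuousMap.compLpInfty ℂ (shiftPoint x))
  have hΦX : Φ ∘ coordFn x = X := by
    ext i f j
    simp [Φ, hX, shiftPoint, coordFn, add_comm]
  have hΦ : Function.Injective Φ :=
    (lp.diagonal_injective (ι := ℤ) (𝕜 := ℂ)).comp
      (ContinuousMap.compLpInfty_injective (denseRange_shiftPoint x))
  have hrange : Φ.range = Cstar (Set.range X) := by
    rw [Φ.range_eq_topologicalClosure_adjoin_image hΦ (topologicalClosure_adjoin_range_coordFn x),
      ← Set.range_comp, hΦX, Cstar]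
  obtain ⟨Ψ, hΨ⟩ := Φ.exists_starAlgEquiv_of_range_eq hΦ hrange
  exact ⟨Ψ, fun i => (hΨ _).trans (congrFun hΦX i)⟩
end
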